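/- The function v(t,x) = 2^{1/4}(1−t)^{3/4}√(x(1−x)) satisfies the HJB equation ∂_t v(t,x) + sup_{σ ≥ 0} { (1/2)σ² ∂²ₓₓ v(t,x) + σ^{1/2} } = 0 for all (t,x) ∈ [0,1) × (0,1), and the supremum is attained uniquely at σ = √(2/(1−t))·x(1−x). -/

import Mathlib

/-!
Put `u = √σ̄`. Then `v = (1 - t) u`, and the two derivatives of `v` are `∂ₜv = -(3/4) u`
and `∂ₓₓv = -1 / (2 u³)`. For the Hamiltonian `H(σ) = σ² D / 2 + √σ` with `2 u³ D = -1`,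
substituting `σ = w²` gives `4 u³ (H(u²) - H(w²)) = (w - u)² (w² + 2 w u + 3 u²)`,
so `u²` is the unique maximiser of `H` on `[0, ∞)`, and `H(u²) = (3/4) u` cancels `∂ₜv`.
-/

noncomputable def vHalf (t x : ℝ) : ℝ :=
  (2 : ℝ) ^ ((1 : ℝ) / 4) * (1 - t) ^ ((3 : ℝ) / 4) * Real.sqrt (x * (1 - x))

noncomputable def sigmaBarHalf (t x : ℝ) : ℝ := Real.sqrt (2 / (1 - t)) * (x * (1 - x))

open Real Set

noncomputable def hamiltonian (D σ : ℝ) : ℝ := (1 / 2) * σ ^ 2 * D + σ ^ ((1 : ℝ) / 2)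

section Hamiltonian

variable {D u : ℝ}

lemma hamiltonian_sq {w : ℝ} (hw : 0 ≤ w) :
    hamiltonian D (w ^ 2) = (1 / 2) * w ^ 4 * D + w := by
  rw [hamiltonian, ← sqrt_eq_rpow, sqrt_sq hw]
  ring

lemma hamiltonian_sq_eq_three_fourths_mul (hu : 0 ≤ u) (hD : 2 * u ^ 3 * D = -1) :
    hamiltonian D (u ^ 2) = (3 / 4) * u := by
  rw [hamiltonian_sq hu]
  linear_combination (u / 4) * hD

lemma hamiltonian_gap (hu : 0 ≤ u) (hD : 2 * u ^ 3 * D = -1) {w : ℝ} (hw : 0 ≤ w) :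
    4 * u ^ 3 * (hamiltonian D (u ^ 2) - hamiltonian D (w ^ 2)) =
      (w - u) ^ 2 * (w ^ 2 + 2 * w * u + 3 * u ^ 2) := by
  rw [hamiltonian_sq hu, hamiltonian_sq hw]
  linear_combination (u ^ 4 - w ^ 4) * hD

lemma hamiltonian_le (hu : 0 < u) (hD : 2 * u ^ 3 * D = -1) {σ : ℝ} (hσ : 0 ≤ σ) :
    hamiltonian D σ ≤ hamiltonian D (u ^ 2) := by
  have hgap := hamiltonian_gap hu.le hD (sqrt_nonneg σ)
  rw [sq_sqrt hσ] at hgap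
  have : 0 ≤ 4 * u ^ 3 * (hamiltonian D (u ^ 2) - hamiltonian D σ) := by
    rw [hgap]
    positivity
  nlinarith [pow_pos hu 3]

lemma eq_of_hamiltonian_eq (hu : 0 < u) (hD : 2 * u ^ 3 * D = -1) {σ : ℝ} (hσ : 0 ≤ σ)
    (h : hamiltonian D σ = hamiltonian D (u ^ 2)) : σ = u ^ 2 := by
  have hgap := hamiltonian_gap hu.le hD (sqrt_nonneg σ)
  rw [sq_sqrt hσ, h, sub_self, mul_zero, eq_comm] at hgap
  have hpos : 0 < σ + 2 * √σ * u + 3 * u ^ 2 := by positivity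
  have hsq : (√σ - u) ^ 2 = 0 := (mul_eq_zero.mp hgap).resolve_right hpos.ne'
  have hsqrt : √σ = u := sub_eq_zero.mp (pow_eq_zero_iff two_ne_zero |>.mp hsq)
  rw [← hsqrt, sq_sqrt hσ]

end Hamiltonian

lemma hasDerivAt_mul_one_sub (y : ℝ) : HasDerivAt (fun z : ℝ => z * (1 - z)) (1 - 2 * y) y :=
  ((hasDerivAt_id' y).mul ((hasDerivAt_id' y).const_sub 1)).congr_deriv (by ring)

lemma deriv_deriv_sqrt_mul_one_sub {x : ℝ} (hx : x ∈ Ioo (0 : ℝ) 1) :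
    deriv (deriv fun z => √(z * (1 - z))) x = -1 / (4 * √(x * (1 - x)) ^ 3) := by
  have hg : 0 < x * (1 - x) := mul_pos hx.1 (by linarith [hx.2])
  have hfirst : deriv (fun z => √(z * (1 - z))) =ᶠ[nhds x]
      fun y => (1 - 2 * y) / (2 * √(y * (1 - y))) := by
    filter_upwards [Ioo_mem_nhds hx.1 hx.2] with y hy
    exact ((hasDerivAt_mul_one_sub y).sqrt (mul_pos hy.1 (by linarith [hy.2])).ne').deriv
  have hnum : HasDerivAt (fun y : ℝ => 1 - 2 * y) (-2) x := by
    simpa using ((hasDerivAt_id x).const_mul 2).const_sub 1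
  have hden := ((hasDerivAt_mul_one_sub x).sqrt hg.ne').const_mul 2
  have hs : 0 < √(x * (1 - x)) := sqrt_pos.mpr hg
  have hsecond : HasDerivAt (fun y => (1 - 2 * y) / (2 * √(y * (1 - y)))) _ x :=
    hnum.div hden (by positivity)
  rw [hfirst.deriv_eq, hsecond.deriv]
  field_simp
  linear_combination (-16 : ℝ) * sq_sqrt hg.le

lemma rpow_quarter_pow {a : ℝ} (ha : 0 ≤ a) (n : ℕ) :
    (a ^ ((1 : ℝ) / 4)) ^ n = a ^ ((n : ℝ) / 4) := by
  rw [← rpow_natCast, ← rpow_mul ha]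
  ring_nf

lemma sqrt_sigmaBarHalf {t : ℝ} (ht : t < 1) (x : ℝ) :
    √(sigmaBarHalf t x) = 2 ^ ((1 : ℝ) / 4) * √(x * (1 - x)) / (1 - t) ^ ((1 : ℝ) / 4) := by
  rw [sigmaBarHalf, sqrt_mul (sqrt_nonneg _), sqrt_eq_rpow, sqrt_eq_rpow,
    ← rpow_mul (by positivity), div_rpow zero_le_two (by linarith)]
  norm_num
  ring

lemma deriv_vHalf_time {t : ℝ} (ht : t < 1) (x : ℝ) :
    deriv (fun s => vHalf s x) t = -(3 / 4) * √(sigmaBarHalf t x) := by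
  have hP : 0 < 1 - t := by linarith
  have hpow : HasDerivAt (fun s : ℝ => (1 - s) ^ ((3 : ℝ) / 4))
      (-1 * ((3 : ℝ) / 4) * (1 - t) ^ ((3 : ℝ) / 4 - 1)) t :=
    ((hasDerivAt_id' t).const_sub 1).rpow_const (Or.inl hP.ne')
  unfold vHalf
  rw [((hpow.const_mul _).mul_const _).deriv, sqrt_sigmaBarHalf ht,
    show (3 : ℝ) / 4 - 1 = -(1 / 4) by norm_num, rpow_neg hP.le]
  ring

lemma deriv_deriv_vHalf {t x : ℝ} (ht : t < 1) (hx : x ∈ Ioo (0 : ℝ) 1) :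
    deriv (fun y => deriv (fun z => vHalf t z) y) x = -1 / (2 * √(sigmaBarHalf t x) ^ 3) := by
  have hP : 0 < 1 - t := by linarith
  have hs : 0 < √(x * (1 - x)) := sqrt_pos.mpr (mul_pos hx.1 (by linarith [hx.2]))
  have hq : 0 < (1 - t) ^ ((1 : ℝ) / 4) := rpow_pos_of_pos hP _
  have ha : 0 < (2 : ℝ) ^ ((1 : ℝ) / 4) := rpow_pos_of_pos two_pos _
  simp only [vHalf, deriv_const_mul_field']
  have hq3 : (1 - t) ^ ((3 : ℝ) / 4) = ((1 - t) ^ ((1 : ℝ) / 4)) ^ 3 := by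
    rw [rpow_quarter_pow hP.le]; norm_num
  have ha4 : ((2 : ℝ) ^ ((1 : ℝ) / 4)) ^ 4 = 2 := by rw [rpow_quarter_pow zero_le_two]; norm_num
  rw [deriv_deriv_sqrt_mul_one_sub hx, sqrt_sigmaBarHalf ht, hq3]
  field_simp
  linear_combination (-2 : ℝ) * ha4

theorem hjb_p_half :
    ∀ t ∈ Set.Ico (0 : ℝ) 1, ∀ x ∈ Set.Ioo (0 : ℝ) 1,
      let Dxx : ℝ := deriv (fun y => deriv (fun z => vHalf t z) y) x
      let F : ℝ → ℝ := fun σ => (1 / 2) * σ ^ 2 * Dxx + σ ^ ((1 : ℝ) / 2)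
      deriv (fun s => vHalf s x) t + F (sigmaBarHalf t x) = 0 ∧
      IsGreatest {y : ℝ | ∃ σ : ℝ, 0 ≤ σ ∧ y = F σ} (F (sigmaBarHalf t x)) ∧
      ∀ σ ∈ Set.Ici (0 : ℝ), F σ = F (sigmaBarHalf t x) → IsMaxOn F (Set.Ici (0 : ℝ)) σ →
        σ = sigmaBarHalf t x := by
  intro t ht x hx Dxx F
  have hσbar : 0 < sigmaBarHalf t x :=
    mul_pos (sqrt_pos.mpr (div_pos two_pos (by linarith [ht.2])))
      (mul_pos hx.1 (by linarith [hx.2]))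
  set u := √(sigmaBarHalf t x) with hu_def
  have hu : 0 < u := sqrt_pos.mpr hσbar
  have hD : 2 * u ^ 3 * Dxx = -1 := by
    simp only [Dxx, deriv_deriv_vHalf ht.2 hx, ← hu_def]
    field_simp
  have hσ : sigmaBarHalf t x = u ^ 2 := (sq_sqrt hσbar.le).symm
  change deriv (fun s => vHalf s x) t + hamiltonian Dxx _ = 0 ∧
    IsGreatest {y | ∃ σ, 0 ≤ σ ∧ y = hamiltonian Dxx σ} (hamiltonian Dxx _) ∧
    ∀ σ ∈ Ici (0 : ℝ), hamiltonian Dxx σ = hamiltonian Dxx _ → _ → σ = _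
  rw [hσ]
  refine ⟨?_, ⟨⟨u ^ 2, sq_nonneg u, rfl⟩, ?_⟩,
    fun σ hσ₀ heq _ => eq_of_hamiltonian_eq hu hD hσ₀ heq⟩
  · rw [deriv_vHalf_time ht.2, ← hu_def, hamiltonian_sq_eq_three_fourths_mul hu.le hD]
    ring
  · rintro _ ⟨σ, hσ₀, rfl⟩
    exact hamiltonian_le hu hD hσ₀
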